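/- arXiv:2601.15658 — 2 statements merged into one kernel-verified Lean document; each statement's English description precedes it below -/
import Mathlib

section
/- Let f : I → ℝ² be a fixed point of the Read–Bajraktarević operator, i.e. a continuous function with f(L_j(t)) = F_j(t, f(t)) for all t ∈ I and j = 1,…,N, with f(t_j) = (v_j, w_j) for all j and with f(t) ∈ K for all t ∈ I. Then the graph G(f) = {(t, f(t)) : t ∈ I} ⊂ I × K is the attractor of the iterated function system {I × K; g_1,…,g_N}, where g_j(t,v,w) = (L_j(t), F_j(t,v,w)): namely G(f) is a nonempty compact set satisfying G(f) = ⋃_{j=1}^N g_j(G(f)), and it is the unique nonempty compact subset of I × K with this property. -/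
/-!
Invariance of the graph: every `x ∈ I` lies in some `I_j = L_j(I)`, say `x = L_j y`, and then
`(x, f x) = g_j (y, f y)` by the functional equation.

Uniqueness: with `D_θ((t,v,w),(t',v',w')) = θ|t - t'| + |v - v'| + |w - w'|`, every `g_j` is an
Edelstein contraction of `I × K` once `θ` is large. The `ℓ¹` norm in `(v, w)` turns the column
bounds `‖b_j‖ + ‖d_j‖ ≤ 1`, `‖c_j‖ + ‖e_j‖ ≤ 1` into `|Δ F_j| ≤ |Δ s_j| + |Δ r_j| < |Δ(v, w)|`,
and the weight `θ` absorbs the Lipschitz dependence of `F_j` on `t` against the factor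
`|a_j| < 1`. For two nonempty compact invariant sets `A`, `B`, a point of `A` farthest from `B`
(in `D_θ`) is then forced to lie in `B`.
-/

open Set Filter

theorem subset_of_edelstein_of_subset_biUnion_image {α ι : Type*} [TopologicalSpace α]
    {d : α → α → ℝ} (hd : Continuous ↿d) (hd_self : ∀ x, d x x = 0)
    (hd_pos : ∀ x y, x ≠ y → 0 < d x y) {J : Set ι} {g : ι → α → α} {X : Set α}
    (hg : ∀ j ∈ J, ∀ x ∈ X, ∀ y ∈ X, x ≠ y → d (g j x) (g j y) < d x y)
    {A B : Set α} (hAX : A ⊆ X) (hBX : B ⊆ X) (hA : IsCompact A) (hB : IsCompact B)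
    (hBne : B.Nonempty) (hAg : A ⊆ ⋃ j ∈ J, g j '' A) (hBg : ⋃ j ∈ J, g j '' B ⊆ B) :
    A ⊆ B := by
  set φ : α → ℝ := fun x => sInf (d x '' B)
  have hφ_attained : ∀ x, ∃ y ∈ B, φ x = d x y ∧ ∀ y' ∈ B, φ x ≤ d x y' := by
    intro x
    obtain ⟨y, hyB, hmin⟩ :=
      hB.exists_isMinOn hBne (hd.comp (continuous_const.prodMk continuous_id)).continuousOn
    have hφx : φ x = d x y := (IsLeast.csInf_eq ⟨mem_image_of_mem _ hyB, forall_mem_image.2 hmin⟩)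
    exact ⟨y, hyB, hφx, fun y' hy' => hφx ▸ hmin hy'⟩
  intro x hx
  obtain ⟨x₀, hx₀A, hmax⟩ := hA.exists_isMaxOn ⟨x, hx⟩ (hB.continuous_sInf hd).continuousOn
  have hφx₀ : φ x₀ ≤ 0 := by
    obtain ⟨j, hj, y, hyA, rfl⟩ : ∃ j ∈ J, ∃ y ∈ A, g j y = x₀ := by simpa using hAg hx₀A
    obtain ⟨z, hzB, hφy, -⟩ := hφ_attained y
    obtain ⟨-, -, -, hφgy⟩ := hφ_attained (g j y)
    have hgzB : g j z ∈ B := hBg (mem_biUnion hj (mem_image_of_mem _ hzB))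
    rcases eq_or_ne y z with rfl | hyz
    · simpa [hd_self] using hφgy _ hgzB
    · have hcontr := hg j hj y (hAX hyA) z (hBX hzB) hyz
      have hφgy_le := hφgy _ hgzB
      have hφy_le : φ y ≤ φ (g j y) := hmax hyA
      linarith
  obtain ⟨y, hyB, hφx, -⟩ := hφ_attained x
  obtain rfl : x = y := by
    by_contra hxy
    have hφx_le : φ x ≤ φ x₀ := hmax hx
    linarith [hd_pos x y hxy]
  exact hyB

theorem image_graph_eq_biUnion_image {α β ι : Type*} {J : Set ι} {L : ι → α → α}
    {F : ι → α → β → β} {f : α → β} {I : Set α} (hmaps : ∀ j ∈ J, MapsTo (L j) I I)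
    (hcover : I ⊆ ⋃ j ∈ J, L j '' I) (hf : ∀ j ∈ J, ∀ x ∈ I, f (L j x) = F j x (f x)) :
    (fun x => (x, f x)) '' I =
      ⋃ j ∈ J, (fun P : α × β => (L j P.1, F j P.1 P.2)) '' ((fun x => (x, f x)) '' I) := by
  refine (image_subset_iff.2 fun x hx => ?_).antisymm (iUnion₂_subset fun j hj => ?_)
  · obtain ⟨j, hj, y, hy, rfl⟩ : ∃ j ∈ J, ∃ y ∈ I, L j y = x := by simpa using hcover hx
    exact mem_biUnion hj ⟨(y, f y), mem_image_of_mem _ hy, by simp [hf j hj y hy]⟩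
  · rintro _ ⟨_, ⟨x, hx, rfl⟩, rfl⟩
    exact ⟨L j x, hmaps j hj hx, by simp [hf j hj x hx]⟩

theorem exists_lt_mem_Icc_succ {α : Type*} [LinearOrder α] {t : ℕ → α} {N : ℕ} (hN : 0 < N)
    {x : α} (hx : x ∈ Icc (t 0) (t N)) : ∃ j < N, x ∈ Icc (t j) (t (j + 1)) := by
  induction N with
  | zero => omega
  | succ n ih =>
    rcases le_or_gt (t n) x with hnx | hxn
    · exact ⟨n, n.lt_succ_self, hnx, hx.2⟩
    · have hn : 0 < n := Nat.pos_of_ne_zero fun h => by subst h; exact hxn.not_ge hx.1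
      obtain ⟨j, hj, hxj⟩ := ih hn ⟨hx.1, hxn.le⟩
      exact ⟨j, by omega, hxj⟩

theorem image_Icc_of_affine {L : ℝ → ℝ} {a b x₀ x₁ y₀ y₁ : ℝ} (hL : ∀ x, L x = a * x + b)
    (hx : x₀ < x₁) (hy : y₀ < y₁) (h₀ : L x₀ = y₀) (h₁ : L x₁ = y₁) :
    L '' Icc x₀ x₁ = Icc y₀ y₁ := by
  have ha : 0 < a := by
    rw [hL] at h₀ h₁
    nlinarith
  rw [show L = (a * · + b) from funext hL, image_affine_Icc' ha, ← hL, ← hL, h₀, h₁]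

section Subdivision

variable {N : ℕ} {t : ℕ → ℝ} {a fc : ℕ → ℝ} {L : ℕ → ℝ → ℝ}
  (ht : StrictMonoOn t (Iic N)) (hL : ∀ j, 1 ≤ j → j ≤ N → ∀ x : ℝ, L j x = a j * x + fc j)
  (hL0 : ∀ j, 1 ≤ j → j ≤ N → L j (t 0) = t (j - 1)) (hLN : ∀ j, 1 ≤ j → j ≤ N → L j (t N) = t j)
include ht hL hL0 hLN

theorem image_Icc_eq_Icc_pred (hN : 0 < N) {j : ℕ} (hj : j ∈ Finset.Icc 1 N) :
    L j '' Icc (t 0) (t N) = Icc (t (j - 1)) (t j) := by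
  obtain ⟨hj₁, hjN⟩ := Finset.mem_Icc.1 hj
  exact image_Icc_of_affine (hL j hj₁ hjN) (ht (by simp) (by simp) hN)
    (ht (by simp; omega) (by simpa) (by omega)) (hL0 j hj₁ hjN) (hLN j hj₁ hjN)

theorem mapsTo_Icc (hN : 0 < N) :
    ∀ j ∈ Finset.Icc 1 N, MapsTo (L j) (Icc (t 0) (t N)) (Icc (t 0) (t N)) := fun j hj => by
  obtain ⟨hj₁, hjN⟩ := Finset.mem_Icc.1 hj
  refine (mapsTo_image _ _).mono_right
    ((image_Icc_eq_Icc_pred ht hL hL0 hLN hN hj).trans_subset (Icc_subset_Icc ?_ ?_))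
  · exact ht.monotoneOn (by simp) (by simp; omega) (by omega)
  · exact ht.monotoneOn (by simpa) (by simp) hjN

theorem Icc_subset_biUnion_image (hN : 0 < N) :
    Icc (t 0) (t N) ⊆ ⋃ j ∈ Finset.Icc 1 N, L j '' Icc (t 0) (t N) := fun x hx => by
  obtain ⟨j, hj, hxj⟩ := exists_lt_mem_Icc_succ hN hx
  have hj' : j + 1 ∈ Finset.Icc 1 N := Finset.mem_Icc.2 ⟨by omega, hj⟩
  exact mem_biUnion hj' (by simpa [image_Icc_eq_Icc_pred ht hL hL0 hLN hN hj'] using hxj)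

end Subdivision

def l1Dist (u z : ℝ × ℝ) : ℝ := |u.1 - z.1| + |u.2 - z.2|

def weightedDist (θ : ℝ) (P Q : ℝ × ℝ × ℝ) : ℝ := θ * |P.1 - Q.1| + l1Dist P.2 Q.2

theorem l1Dist_triangle (u v z : ℝ × ℝ) : l1Dist u z ≤ l1Dist u v + l1Dist v z := by
  unfold l1Dist
  linarith [abs_sub_le u.1 v.1 z.1, abs_sub_le u.2 v.2 z.2]

theorem continuous_weightedDist (θ : ℝ) : Continuous ↿(weightedDist θ) := by
  unfold weightedDist l1Dist
  fun_prop

theorem weightedDist_self (θ : ℝ) (P : ℝ × ℝ × ℝ) : weightedDist θ P P = 0 := by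
  simp [weightedDist, l1Dist]

theorem weightedDist_pos {θ : ℝ} (hθ : 0 < θ) {P Q : ℝ × ℝ × ℝ} (hPQ : P ≠ Q) :
    0 < weightedDist θ P Q := by
  obtain ⟨x, u₁, u₂⟩ := P
  obtain ⟨y, z₁, z₂⟩ := Q
  have h : x - y ≠ 0 ∨ u₁ - z₁ ≠ 0 ∨ u₂ - z₂ ≠ 0 := by
    simp only [sub_ne_zero]
    by_contra! h
    exact hPQ (by rw [h.1, h.2.1, h.2.2])
  simp only [weightedDist, l1Dist]
  rcases h with h | h | h <;> have := abs_pos.2 h <;>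
    nlinarith [abs_nonneg (x - y), abs_nonneg (u₁ - z₁), abs_nonneg (u₂ - z₂)]

theorem eventually_weightedDist_lt {I : Set ℝ} {K : Set (ℝ × ℝ)} {L : ℝ → ℝ}
    {F : ℝ → ℝ × ℝ → ℝ × ℝ} {k M : ℝ} (hk : k < 1) (hL : ∀ x y, |L x - L y| ≤ k * |x - y|)
    (hFx : ∀ x ∈ I, ∀ y ∈ I, ∀ z ∈ K, l1Dist (F x z) (F y z) ≤ M * |x - y|)
    (hFz : ∀ x ∈ I, ∀ u ∈ K, ∀ z ∈ K, u ≠ z → l1Dist (F x u) (F x z) < l1Dist u z) :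
    ∀ᶠ θ : ℝ in atTop, ∀ P ∈ I ×ˢ K, ∀ Q ∈ I ×ˢ K, P ≠ Q →
      weightedDist θ (L P.1, F P.1 P.2) (L Q.1, F Q.1 Q.2) < weightedDist θ P Q := by
  filter_upwards [eventually_gt_atTop (M / (1 - k)), eventually_ge_atTop 0] with θ hθM hθ
  rintro ⟨x, u⟩ ⟨hx, hu⟩ ⟨y, z⟩ ⟨hy, hz⟩ hne
  simp only [weightedDist]
  rcases eq_or_ne x y with rfl | hxy
  · have huz : u ≠ z := fun h => hne (h ▸ rfl)
    simpa using hFz x hx u hu z hz huz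
  · have hFu : l1Dist (F x u) (F x z) ≤ l1Dist u z := by
      rcases eq_or_ne u z with rfl | huz
      · simp [l1Dist]
      · exact (hFz x hx u hu z hz huz).le
    have hF : l1Dist (F x u) (F y z) ≤ l1Dist u z + M * |x - y| :=
      (l1Dist_triangle _ (F x z) _).trans (add_le_add hFu (hFx x hx y hy z hz))
    have hLxy : θ * |L x - L y| ≤ θ * (k * |x - y|) := mul_le_mul_of_nonneg_left (hL x y) hθ
    have hMθ : M < θ * (1 - k) := (div_lt_iff₀ (by linarith)).1 hθM
    have hxy' : 0 < |x - y| := abs_pos.2 (sub_ne_zero.2 hxy)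
    nlinarith

theorem abs_sub_le_of_abs_sub_lt {s : ℝ → ℝ} (hs : ∀ x y, x ≠ y → |s x - s y| < |x - y|)
    (x y : ℝ) : |s x - s y| ≤ |x - y| := by
  rcases eq_or_ne x y with rfl | hxy
  · simp
  · exact (hs x y hxy).le

theorem continuous_of_abs_sub_lt {s : ℝ → ℝ} (hs : ∀ x y, x ≠ y → |s x - s y| < |x - y|) :
    Continuous s :=
  (LipschitzWith.of_dist_le_mul (K := 1) fun x y => by
    simpa [Real.dist_eq] using abs_sub_le_of_abs_sub_lt hs x y).continuous

theorem abs_mul_add_mul_add_abs_le {b c d e : ℝ} (hbd : |b| + |d| ≤ 1) (hce : |c| + |e| ≤ 1)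
    (S R : ℝ) : |b * S + c * R| + |d * S + e * R| ≤ |S| + |R| := by
  have h₁ := abs_add_le (b * S) (c * R)
  have h₂ := abs_add_le (d * S) (e * R)
  simp only [abs_mul] at h₁ h₂
  nlinarith [abs_nonneg S, abs_nonneg R]

theorem abs_mul_add_mul_add_sub_le {I : Set ℝ} {b c p : ℝ → ℝ} {Kb Kc Kp : NNReal}
    (hb : LipschitzOnWith Kb b I) (hc : LipschitzOnWith Kc c I) (hp : LipschitzOnWith Kp p I)
    {x y : ℝ} (hx : x ∈ I) (hy : y ∈ I) {S R C : ℝ} (hS : |S| ≤ C) (hR : |R| ≤ C) :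
    |(b x * S + c x * R + p x) - (b y * S + c y * R + p y)| ≤
      (Kb * C + Kc * C + Kp) * |x - y| := by
  have lip : ∀ {g : ℝ → ℝ} {Kg : NNReal}, LipschitzOnWith Kg g I → |g x - g y| ≤ Kg * |x - y| :=
    fun hg => by simpa [Real.dist_eq] using hg.dist_le_mul x hx y hy
  have hb' := mul_le_mul (lip hb) hS (abs_nonneg S) (by positivity)
  have hc' := mul_le_mul (lip hc) hR (abs_nonneg R) (by positivity)
  calc |(b x * S + c x * R + p x) - (b y * S + c y * R + p y)|
      = |(b x - b y) * S + (c x - c y) * R + (p x - p y)| := by ring_nf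
    _ ≤ |b x - b y| * |S| + |c x - c y| * |R| + |p x - p y| := by
      rw [← abs_mul, ← abs_mul]
      exact (abs_add_le _ _).trans (add_le_add_left (abs_add_le _ _) _)
    _ ≤ (Kb * C + Kc * C + Kp) * |x - y| := by nlinarith [lip hp]

section ReadBajraktarevic

variable {I : Set ℝ} {K : Set (ℝ × ℝ)} {b c d e p q s r : ℝ → ℝ} {F : ℝ → ℝ × ℝ → ℝ × ℝ}

theorem l1Dist_apply_lt (hF : ∀ x vw, F x vw = (b x * s vw.1 + c x * r vw.2 + p x,
      d x * s vw.1 + e x * r vw.2 + q x))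
    (hs : ∀ x y, x ≠ y → |s x - s y| < |x - y|) (hr : ∀ x y, x ≠ y → |r x - r y| < |x - y|)
    {x : ℝ} (hbd : |b x| + |d x| ≤ 1) (hce : |c x| + |e x| ≤ 1) {u z : ℝ × ℝ} (huz : u ≠ z) :
    l1Dist (F x u) (F x z) < l1Dist u z := by
  have hsr : |s u.1 - s z.1| + |r u.2 - r z.2| < |u.1 - z.1| + |u.2 - z.2| := by
    rcases eq_or_ne u.1 z.1 with h₁ | h₁
    · have h₂ : u.2 ≠ z.2 := fun h₂ => huz (Prod.ext h₁ h₂)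
      linarith [hr _ _ h₂, abs_sub_le_of_abs_sub_lt hs u.1 z.1]
    · linarith [hs _ _ h₁, abs_sub_le_of_abs_sub_lt hr u.2 z.2]
  calc l1Dist (F x u) (F x z)
      = |b x * (s u.1 - s z.1) + c x * (r u.2 - r z.2)|
        + |d x * (s u.1 - s z.1) + e x * (r u.2 - r z.2)| := by
        simp only [l1Dist, hF]; ring_nf
    _ ≤ |s u.1 - s z.1| + |r u.2 - r z.2| := abs_mul_add_mul_add_abs_le hbd hce _ _
    _ < l1Dist u z := hsr

theorem exists_l1Dist_apply_sub_le (hF : ∀ x vw, F x vw = (b x * s vw.1 + c x * r vw.2 + p x,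
      d x * s vw.1 + e x * r vw.2 + q x))
    (hK : IsCompact K) (hs : Continuous s) (hr : Continuous r)
    (hLip : ∀ g ∈ ([b, c, d, e, p, q] : List (ℝ → ℝ)), ∃ Kg : NNReal, LipschitzOnWith Kg g I) :
    ∃ M, ∀ x ∈ I, ∀ y ∈ I, ∀ z ∈ K, l1Dist (F x z) (F y z) ≤ M * |x - y| := by
  obtain ⟨C, hC⟩ := hK.exists_bound_of_continuousOn (f := fun z : ℝ × ℝ => (s z.1, r z.2))
    (by fun_prop)
  obtain ⟨Kb, hb⟩ := hLip b (by simp)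
  obtain ⟨Kc, hc⟩ := hLip c (by simp)
  obtain ⟨Kd, hd⟩ := hLip d (by simp)
  obtain ⟨Ke, he⟩ := hLip e (by simp)
  obtain ⟨Kp, hp⟩ := hLip p (by simp)
  obtain ⟨Kq, hq⟩ := hLip q (by simp)
  refine ⟨(Kb * C + Kc * C + Kp) + (Kd * C + Ke * C + Kq), fun x hx y hy z hz => ?_⟩
  have hsz : |s z.1| ≤ C := (norm_fst_le _).trans (hC z hz)
  have hrz : |r z.2| ≤ C := (norm_snd_le _).trans (hC z hz)
  rw [add_mul]
  simp only [l1Dist, hF]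
  exact add_le_add (abs_mul_add_mul_add_sub_le hb hc hp hx hy hsz hrz)
    (abs_mul_add_mul_add_sub_le hd he hq hx hy hsz hrz)

theorem eventually_weightedDist_apply_lt {L : ℝ → ℝ} {a f₀ : ℝ} (hL : ∀ x, L x = a * x + f₀)
    (ha : |a| < 1)
    (hLip : ∀ g ∈ ([b, c, d, e, p, q] : List (ℝ → ℝ)), ∃ Kg : NNReal, LipschitzOnWith Kg g I)
    (hbd : ∃ B D : ℝ, B + D ≤ 1 ∧ (∀ x ∈ I, |b x| ≤ B) ∧ (∀ x ∈ I, |d x| ≤ D))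
    (hce : ∃ C E : ℝ, C + E ≤ 1 ∧ (∀ x ∈ I, |c x| ≤ C) ∧ (∀ x ∈ I, |e x| ≤ E))
    (hs : ∀ x y, x ≠ y → |s x - s y| < |x - y|) (hr : ∀ x y, x ≠ y → |r x - r y| < |x - y|)
    (hF : ∀ x vw, F x vw = (b x * s vw.1 + c x * r vw.2 + p x,
      d x * s vw.1 + e x * r vw.2 + q x))
    (hK : IsCompact K) :
    ∀ᶠ θ : ℝ in atTop, ∀ P ∈ I ×ˢ K, ∀ Q ∈ I ×ˢ K, P ≠ Q →
      weightedDist θ (L P.1, F P.1 P.2) (L Q.1, F Q.1 Q.2) < weightedDist θ P Q := by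
  obtain ⟨M, hM⟩ := exists_l1Dist_apply_sub_le hF hK (continuous_of_abs_sub_lt hs)
    (continuous_of_abs_sub_lt hr) hLip
  obtain ⟨B, D, hBD, hB, hD⟩ := hbd
  obtain ⟨C, E, hCE, hC, hE⟩ := hce
  have hLxy : ∀ x y, |L x - L y| ≤ |a| * |x - y| := fun x y => by
    rw [hL, hL, ← abs_mul]
    exact (congrArg abs (by ring)).le
  exact eventually_weightedDist_lt ha hLxy hM fun x hx u _ z _ huz =>
    l1Dist_apply_lt hF hs hr (by linarith [hB x hx, hD x hx]) (by linarith [hC x hx, hE x hx]) huz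

end ReadBajraktarevic

theorem graph_is_attractor_general
    (N : ℕ) (hN : 0 < N)
    (t : ℕ → ℝ)
    (htmono : ∀ j, j < N → t j < t (j + 1))
    (a fc : ℕ → ℝ) (L : ℕ → ℝ → ℝ)
    (hL : ∀ j, 1 ≤ j → j ≤ N → ∀ x : ℝ, L j x = a j * x + fc j)
    (ha : ∀ j, 1 ≤ j → j ≤ N → a j ≠ 0 ∧ |a j| < 1)
    (hL0 : ∀ j, 1 ≤ j → j ≤ N → L j (t 0) = t (j - 1))
    (hLN : ∀ j, 1 ≤ j → j ≤ N → L j (t N) = t j)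
    (b c d e p q : ℕ → ℝ → ℝ)
    (hLip : ∀ j, 1 ≤ j → j ≤ N → ∀ g ∈ ([b j, c j, d j, e j, p j, q j] : List (ℝ → ℝ)),
      ∃ Kg : NNReal, LipschitzOnWith Kg g (Set.Icc (t 0) (t N)))
    (hbd : ∀ j, 1 ≤ j → j ≤ N → ∃ B D : ℝ, B + D ≤ 1 ∧
      (∀ x ∈ Set.Icc (t 0) (t N), |b j x| ≤ B) ∧ (∀ x ∈ Set.Icc (t 0) (t N), |d j x| ≤ D))
    (hce : ∀ j, 1 ≤ j → j ≤ N → ∃ C E : ℝ, C + E ≤ 1 ∧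
      (∀ x ∈ Set.Icc (t 0) (t N), |c j x| ≤ C) ∧ (∀ x ∈ Set.Icc (t 0) (t N), |e j x| ≤ E))
    (s r : ℕ → ℝ → ℝ)
    (hs : ∀ j, 1 ≤ j → j ≤ N → ∀ x y : ℝ, x ≠ y → |s j x - s j y| < |x - y|)
    (hr : ∀ j, 1 ≤ j → j ≤ N → ∀ x y : ℝ, x ≠ y → |r j x - r j y| < |x - y|)
    (F : ℕ → ℝ → ℝ × ℝ → ℝ × ℝ)
    (hF : ∀ j x vw, F j x vw = (b j x * s j vw.1 + c j x * r j vw.2 + p j x,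
                                d j x * s j vw.1 + e j x * r j vw.2 + q j x))
    (K : Set (ℝ × ℝ)) (hKc : IsCompact K)
    (f : ℝ → ℝ × ℝ) (hfc : ContinuousOn f (Set.Icc (t 0) (t N)))
    (hfe : ∀ j, 1 ≤ j → j ≤ N → ∀ x ∈ Set.Icc (t 0) (t N), f (L j x) = F j x (f x))
    (hfK : ∀ x ∈ Set.Icc (t 0) (t N), f x ∈ K) :
    ((fun x => (x, f x)) '' Set.Icc (t 0) (t N)).Nonempty ∧
    IsCompact ((fun x => (x, f x)) '' Set.Icc (t 0) (t N)) ∧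
    ((fun x => (x, f x)) '' Set.Icc (t 0) (t N)) =
      ⋃ j ∈ Finset.Icc 1 N, (fun P : ℝ × ℝ × ℝ => (L j P.1, F j P.1 P.2)) ''
        ((fun x => (x, f x)) '' Set.Icc (t 0) (t N)) ∧
    ∀ A : Set (ℝ × ℝ × ℝ), A ⊆ (Set.Icc (t 0) (t N)) ×ˢ K → A.Nonempty → IsCompact A →
      A = ⋃ j ∈ Finset.Icc 1 N, (fun P : ℝ × ℝ × ℝ => (L j P.1, F j P.1 P.2)) '' A →
      A = (fun x => (x, f x)) '' Set.Icc (t 0) (t N) := by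
  set I := Icc (t 0) (t N)
  set G := (fun x => (x, f x)) '' I
  have ht : StrictMonoOn t (Iic N) := strictMonoOn_Iic_of_lt_succ fun j hj => htmono j hj
  have hGinv : G = ⋃ j ∈ Finset.Icc 1 N, (fun P : ℝ × ℝ × ℝ => (L j P.1, F j P.1 P.2)) '' G :=
    image_graph_eq_biUnion_image (mapsTo_Icc ht hL hL0 hLN hN)
      (Icc_subset_biUnion_image ht hL hL0 hLN hN)
      fun j hj => hfe j (Finset.mem_Icc.1 hj).1 (Finset.mem_Icc.1 hj).2
  have hGI : G ⊆ I ×ˢ K := image_subset_iff.2 fun x hx => ⟨hx, hfK x hx⟩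
  have hGc : IsCompact G := isCompact_Icc.image_of_continuousOn (continuousOn_id.prodMk hfc)
  have hGne : G.Nonempty := (nonempty_Icc.2 (ht.monotoneOn (by simp) (by simp) hN.le)).image _
  have hcontr : ∀ᶠ θ : ℝ in atTop, ∀ j ∈ Finset.Icc 1 N, ∀ P ∈ I ×ˢ K, ∀ Q ∈ I ×ˢ K, P ≠ Q →
      weightedDist θ (L j P.1, F j P.1 P.2) (L j Q.1, F j Q.1 Q.2) < weightedDist θ P Q :=
    (eventually_all_finset _).2 fun j hj => by
      obtain ⟨hj₁, hjN⟩ := Finset.mem_Icc.1 hj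
      exact eventually_weightedDist_apply_lt (hL j hj₁ hjN) (ha j hj₁ hjN).2 (hLip j hj₁ hjN)
        (hbd j hj₁ hjN) (hce j hj₁ hjN) (hs j hj₁ hjN) (hr j hj₁ hjN) (hF j) hKc
  obtain ⟨θ, hθ, hθ_pos⟩ := (hcontr.and (eventually_gt_atTop 0)).exists
  have hsub := @subset_of_edelstein_of_subset_biUnion_image _ _ _ _ (continuous_weightedDist θ)
    (weightedDist_self θ) (fun _ _ => weightedDist_pos hθ_pos) _ _ _ hθ
  refine ⟨hGne, hGc, hGinv, fun A hAI hAne hAc hAinv => ?_⟩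
  exact (hsub hAI hGI hAc hGc hGne hAinv.subset hGinv.symm.subset).antisymm
    (hsub hGI hAI hGc hAc hAne hGinv.subset hAinv.symm.subset)

/-- The graph of the fixed point `f` of the Read–Bajraktarević operator is the
attractor of the IFS `{I × K; g 1, …, g N}` with `g j (t,v,w) = (L j t, F j t (v,w))`:
it is a nonempty compact set equal to the union of its images under the `g j`, and it is
the unique nonempty compact subset of `I × K` with this property. -/
theorem graph_is_attractor
    (N : ℕ) (hN : 0 < N)
    (t v w : ℕ → ℝ)
    (htmono : ∀ j, j < N → t j < t (j + 1))
    (a fc : ℕ → ℝ) (L : ℕ → ℝ → ℝ)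
    (hL : ∀ j, 1 ≤ j → j ≤ N → ∀ x : ℝ, L j x = a j * x + fc j)
    (ha : ∀ j, 1 ≤ j → j ≤ N → a j ≠ 0 ∧ |a j| < 1)
    (hL0 : ∀ j, 1 ≤ j → j ≤ N → L j (t 0) = t (j - 1))
    (hLN : ∀ j, 1 ≤ j → j ≤ N → L j (t N) = t j)
    (b c d e p q : ℕ → ℝ → ℝ)
    (hLip : ∀ j, 1 ≤ j → j ≤ N → ∀ g ∈ ([b j, c j, d j, e j, p j, q j] : List (ℝ → ℝ)),
      ∃ Kg : NNReal, LipschitzOnWith Kg g (Set.Icc (t 0) (t N)))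
    (hbd : ∀ j, 1 ≤ j → j ≤ N → ∃ B D : ℝ, B + D ≤ 1 ∧
      (∀ x ∈ Set.Icc (t 0) (t N), |b j x| ≤ B) ∧ (∀ x ∈ Set.Icc (t 0) (t N), |d j x| ≤ D))
    (hce : ∀ j, 1 ≤ j → j ≤ N → ∃ C E : ℝ, C + E ≤ 1 ∧
      (∀ x ∈ Set.Icc (t 0) (t N), |c j x| ≤ C) ∧ (∀ x ∈ Set.Icc (t 0) (t N), |e j x| ≤ E))
    (s r : ℕ → ℝ → ℝ)
    (hs : ∀ j, 1 ≤ j → j ≤ N → ∀ x y : ℝ, x ≠ y → |s j x - s j y| < |x - y|)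
    (hr : ∀ j, 1 ≤ j → j ≤ N → ∀ x y : ℝ, x ≠ y → |r j x - r j y| < |x - y|)
    (F : ℕ → ℝ → ℝ × ℝ → ℝ × ℝ)
    (hF : ∀ j x vw, F j x vw = (b j x * s j vw.1 + c j x * r j vw.2 + p j x,
                                d j x * s j vw.1 + e j x * r j vw.2 + q j x))
    (hF0 : ∀ j, 1 ≤ j → j ≤ N → F j (t 0) (v 0, w 0) = (v (j - 1), w (j - 1)))
    (hFN : ∀ j, 1 ≤ j → j ≤ N → F j (t N) (v N, w N) = (v j, w j))
    (K : Set (ℝ × ℝ)) (hKc : IsCompact K)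
    (hKv : ∀ j, j ≤ N → (v j, w j) ∈ K)
    (hKF : ∀ j, 1 ≤ j → j ≤ N → ∀ x ∈ Set.Icc (t 0) (t N), ∀ vw ∈ K, F j x vw ∈ K)
    (f : ℝ → ℝ × ℝ) (hfc : ContinuousOn f (Set.Icc (t 0) (t N)))
    (hfe : ∀ j, 1 ≤ j → j ≤ N → ∀ x ∈ Set.Icc (t 0) (t N), f (L j x) = F j x (f x))
    (hfi : ∀ j, j ≤ N → f (t j) = (v j, w j))
    (hfK : ∀ x ∈ Set.Icc (t 0) (t N), f x ∈ K) :
    ((fun x => (x, f x)) '' Set.Icc (t 0) (t N)).Nonempty ∧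
    IsCompact ((fun x => (x, f x)) '' Set.Icc (t 0) (t N)) ∧
    ((fun x => (x, f x)) '' Set.Icc (t 0) (t N)) =
      ⋃ j ∈ Finset.Icc 1 N, (fun P : ℝ × ℝ × ℝ => (L j P.1, F j P.1 P.2)) ''
        ((fun x => (x, f x)) '' Set.Icc (t 0) (t N)) ∧
    ∀ A : Set (ℝ × ℝ × ℝ), A ⊆ (Set.Icc (t 0) (t N)) ×ˢ K → A.Nonempty → IsCompact A →
      A = ⋃ j ∈ Finset.Icc 1 N, (fun P : ℝ × ℝ × ℝ => (L j P.1, F j P.1 P.2)) '' A →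
      A = (fun x => (x, f x)) '' Set.Icc (t 0) (t N) :=
  graph_is_attractor_general N hN t htmono a fc L hL ha hL0 hLN b c d e p q hLip hbd hce s r hs hr F
    hF K hKc f hfc hfe hfK
end

section
/- Suppose in addition that max_{1≤j≤N} (‖b_j‖∞ + ‖c_j‖∞) < 1 and max_{1≤j≤N} (‖d_j‖∞ + ‖e_j‖∞) < 1. Then the Edelstein hidden variable fractal interpolation function f_1 (the first component of the fixed point f of the Read–Bajraktarević operator) is Hölder continuous: there exist real numbers K > 0 and α ∈ (0, 1] such that |f_1(t) − f_1(t')| ≤ K |t − t'|^α for all t, t' ∈ I. -/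
/-!
In the max norm on `ℝ × ℝ`, the fixed-point equation and the row-sum bounds give
`‖f (L j u) - f (L j u')‖ ≤ γ ‖f u - f u'‖ + K |u - u'|` with `γ < 1`. Let `ρ < 1` bound the
slopes of the `L j` from below. Two points at distance at most `ρ ^ (n + 1) |I|` either lie in one
cell `I_j`, as images of points at distance at most `ρ ^ n |I|`, or in two adjacent cells. In the
second case each of them is joined to the common node by the image of a pair containing an endpoint
of `I`; the endpoints are fixed by `L 1` and `L N`, so such pairs obey the one-cell recursion and
the factor 2 of the triangle inequality is paid only once. Induction on `n` bounds the oscillation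
of `f` at scale `ρ ^ n |I|` by a multiple of `θ ^ n` for any `θ ∈ (γ, 1)` with `ρ ≤ θ`, which is
Hölder continuity with exponent `log θ / log ρ`.
-/

open Set Filter Topology

theorem exists_mem_Ioc_succ {t : ℕ → ℝ} {N : ℕ} {y : ℝ} (hy : y ∈ Ioc (t 0) (t N)) :
    ∃ k < N, y ∈ Ioc (t k) (t (k + 1)) := by
  suffices ∀ m ≤ N, y ≤ t m → ∃ k < m, y ∈ Ioc (t k) (t (k + 1)) by
    exact this N le_rfl hy.2
  intro m
  induction m with
  | zero => exact fun _ h => absurd hy.1 h.not_gt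
  | succ m ih =>
    intro hm h
    by_cases hym : y ≤ t m
    · obtain ⟨k, hk, hyk⟩ := ih (by omega) hym
      exact ⟨k, by omega, hyk⟩
    · exact ⟨m, by omega, lt_of_not_ge hym, h⟩

structure IsAffineCellMaps (N : ℕ) (t a fc : ℕ → ℝ) (L : ℕ → ℝ → ℝ) : Prop where
  lt_succ : ∀ j, j < N → t j < t (j + 1)
  apply_eq : ∀ j, 1 ≤ j → j ≤ N → ∀ x, L j x = a j * x + fc j
  apply_left : ∀ j, 1 ≤ j → j ≤ N → L j (t 0) = t (j - 1)
  apply_right : ∀ j, 1 ≤ j → j ≤ N → L j (t N) = t j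

namespace IsAffineCellMaps

variable {N : ℕ} {t a fc : ℕ → ℝ} {L : ℕ → ℝ → ℝ} (hI : IsAffineCellMaps N t a fc L)
include hI

theorem strictMonoOn : StrictMonoOn t (Iic N) :=
  strictMonoOn_Iic_of_lt_succ fun m hm => hI.lt_succ m hm

theorem first_lt_last (hN : 0 < N) : t 0 < t N :=
  hI.strictMonoOn (show 0 ≤ N from N.zero_le) (show N ≤ N from le_rfl) hN

theorem sub_apply {j : ℕ} (hj1 : 1 ≤ j) (hjN : j ≤ N) (x y : ℝ) :
    L j x - L j y = a j * (x - y) := by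
  rw [hI.apply_eq j hj1 hjN, hI.apply_eq j hj1 hjN]; ring

theorem slope_mul {j : ℕ} (hj1 : 1 ≤ j) (hjN : j ≤ N) :
    a j * (t N - t 0) = t j - t (j - 1) := by
  rw [← hI.sub_apply hj1 hjN, hI.apply_left j hj1 hjN, hI.apply_right j hj1 hjN]

theorem slope_pos (hN : 0 < N) {j : ℕ} (hj1 : 1 ≤ j) (hjN : j ≤ N) : 0 < a j := by
  have hcell : t (j - 1) < t j := by
    simpa [Nat.sub_add_cancel hj1] using hI.lt_succ (j - 1) (by omega)
  have := hI.slope_mul hj1 hjN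
  exact pos_of_mul_pos_left (by linarith) (sub_pos.2 (hI.first_lt_last hN)).le

theorem exists_slope_lower_bound (hN : 0 < N) :
    ∃ ρ, 0 < ρ ∧ ρ < 1 ∧ ∀ j, 1 ≤ j → j ≤ N → ρ ≤ a j := by
  have hslopes : ∀ᶠ ρ in 𝓝[>] (0 : ℝ), ∀ j ∈ Finset.Icc 1 N, ρ ≤ a j :=
    (Finset.eventually_all _).2 fun j hj => by
      rw [Finset.mem_Icc] at hj
      exact (eventually_le_nhds (hI.slope_pos hN hj.1 hj.2)).filter_mono nhdsWithin_le_nhds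
  obtain ⟨ρ, hρ0, hρ1, hρ⟩ := (eventually_mem_nhdsWithin.and
    (((eventually_lt_nhds one_pos).filter_mono nhdsWithin_le_nhds).and hslopes)).exists
  exact ⟨ρ, hρ0, hρ1, fun j hj1 hjN => hρ j (Finset.mem_Icc.2 ⟨hj1, hjN⟩)⟩

theorem abs_sub_le_of_abs_sub_apply_le (hN : 0 < N) {j : ℕ} (hj1 : 1 ≤ j) (hjN : j ≤ N)
    {ρ δ u u' : ℝ} (hρ0 : 0 < ρ) (hρ : ρ ≤ a j) (h : |L j u - L j u'| ≤ ρ * δ) :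
    |u - u'| ≤ δ := by
  have ha := hI.slope_pos hN hj1 hjN
  rw [hI.sub_apply hj1 hjN, abs_mul, abs_of_pos ha] at h
  have hδ : 0 ≤ δ :=
    nonneg_of_mul_nonneg_right ((by positivity : 0 ≤ a j * |u - u'|).trans h) hρ0
  exact le_of_mul_le_mul_left (h.trans (mul_le_mul_of_nonneg_right hρ hδ)) ha

theorem monotone_apply (hN : 0 < N) {j : ℕ} (hj1 : 1 ≤ j) (hjN : j ≤ N) : Monotone (L j) :=
  fun u v huv => by
    rw [← sub_nonneg, hI.sub_apply hj1 hjN]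
    exact mul_nonneg (hI.slope_pos hN hj1 hjN).le (sub_nonneg.2 huv)

theorem exists_apply_eq (hN : 0 < N) {j : ℕ} (hj1 : 1 ≤ j) (hjN : j ≤ N) {x : ℝ}
    (hx : x ∈ Icc (t (j - 1)) (t j)) : ∃ u ∈ Icc (t 0) (t N), L j u = x := by
  have ha := hI.slope_pos hN hj1 hjN
  refine ⟨(x - fc j) / a j, ⟨?_, ?_⟩, ?_⟩
  · rw [le_div_iff₀ ha]
    have := hI.apply_left j hj1 hjN
    rw [hI.apply_eq j hj1 hjN] at this
    linarith [hx.1]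
  · rw [div_le_iff₀ ha]
    have := hI.apply_right j hj1 hjN
    rw [hI.apply_eq j hj1 hjN] at this
    linarith [hx.2]
  · rw [hI.apply_eq j hj1 hjN]; field_simp; ring

end IsAffineCellMaps

theorem exists_holder_of_dist_le_pow {X Y : Type*} [MetricSpace X] [PseudoMetricSpace Y]
    {g : X → Y} {s : Set X} {ρ θ C T : ℝ} (hρ0 : 0 < ρ) (hρθ : ρ ≤ θ) (hθ1 : θ < 1)
    (hC : 0 < C) (hT : 0 < T) (hdiam : ∀ x ∈ s, ∀ y ∈ s, dist x y ≤ T)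
    (h : ∀ n : ℕ, ∀ x ∈ s, ∀ y ∈ s, dist x y ≤ ρ ^ n * T → dist (g x) (g y) ≤ C * θ ^ n) :
    ∃ K, 0 < K ∧ ∃ α : ℝ, 0 < α ∧ α ≤ 1 ∧
      ∀ x ∈ s, ∀ y ∈ s, dist (g x) (g y) ≤ K * dist x y ^ α := by
  have hρ1 : ρ < 1 := hρθ.trans_lt hθ1
  have hθ0 : 0 < θ := hρ0.trans_le hρθ
  set α := Real.logb ρ θ
  have hα0 : 0 < α := Real.logb_pos_of_base_lt_one hρ0 hρ1 hθ0 hθ1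
  have hα1 : α ≤ 1 := by
    calc α ≤ Real.logb ρ ρ := (Real.logb_le_logb_of_base_lt_one hρ0 hρ1 hθ0 hρ0).2 hρθ
      _ = 1 := Real.logb_self_eq_one_iff.2 ⟨hρ0.ne', hρ1.ne, by linarith⟩
  have hθn : ∀ n : ℕ, θ ^ n = (ρ ^ n) ^ α := fun n => by
    rw [← Real.rpow_pow_comm hρ0.le, Real.rpow_logb hρ0 hρ1.ne hθ0]
  refine ⟨C * ((ρ * T)⁻¹) ^ α, by positivity, α, hα0, hα1, fun x hx y hy => ?_⟩
  rcases eq_or_ne x y with rfl | hxy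
  · simp [Real.zero_rpow hα0.ne']
  have hd : 0 < dist x y / T := div_pos (dist_pos.2 hxy) hT
  obtain ⟨n, hn1, hn⟩ := exists_nat_pow_near_of_lt_one hd
    ((div_le_one hT).2 (hdiam x hx y hy)) hρ0 hρ1
  have hscale : ρ ^ n ≤ (ρ * T)⁻¹ * dist x y := by
    rw [inv_mul_eq_div, le_div_iff₀ (by positivity), ← mul_assoc, ← pow_succ]
    exact ((lt_div_iff₀ hT).1 hn1).le
  calc dist (g x) (g y) ≤ C * θ ^ n := h n x hx y hy ((div_le_iff₀ hT).1 hn)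
    _ ≤ C * ((ρ * T)⁻¹ * dist x y) ^ α := by
      rw [hθn]; gcongr
    _ = C * ((ρ * T)⁻¹) ^ α * dist x y ^ α := by
      rw [Real.mul_rpow (by positivity) dist_nonneg, mul_assoc]

theorem mul_add_mul_le_mul_pow_succ {γ K ρ θ T B x y : ℝ} {n : ℕ} (hγ : 0 ≤ γ) (hK : 0 ≤ K)
    (hρ : 0 ≤ ρ) (hρθ : ρ ≤ θ) (hT : 0 ≤ T) (hB : γ * B + K * T ≤ B * θ)
    (hx : x ≤ B * θ ^ n) (hy : y ≤ ρ ^ n * T) : γ * x + K * y ≤ B * θ ^ (n + 1) := by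
  have hθn : 0 ≤ θ ^ n := pow_nonneg (hρ.trans hρθ) n
  calc γ * x + K * y ≤ γ * (B * θ ^ n) + K * (θ ^ n * T) := by
        gcongr
        exact hy.trans (by gcongr)
    _ = θ ^ n * (γ * B + K * T) := by ring
    _ ≤ θ ^ n * (B * θ) := by gcongr
    _ = B * θ ^ (n + 1) := by ring

namespace IsAffineCellMaps

variable {N : ℕ} {t a fc : ℕ → ℝ} {L : ℕ → ℝ → ℝ} (hI : IsAffineCellMaps N t a fc L)
include hI

section Oscillation

variable (hN : 0 < N) {E : Type*} [SeminormedAddCommGroup E] {g : ℝ → E} {γ K : ℝ}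
  (hγ0 : 0 ≤ γ) (hK : 0 ≤ K)
  (hstep : ∀ j, 1 ≤ j → j ≤ N → ∀ u ∈ Icc (t 0) (t N), ∀ u' ∈ Icc (t 0) (t N),
    ‖g (L j u) - g (L j u')‖ ≤ γ * ‖g u - g u'‖ + K * |u - u'|)
  {ρ θ B : ℝ} (hρ0 : 0 < ρ) (hρa : ∀ j, 1 ≤ j → j ≤ N → ρ ≤ a j) (hρθ : ρ ≤ θ)
  (hB : γ * B + K * (t N - t 0) ≤ B * θ)
include hN hγ0 hK hstep hρ0 hρa hρθ hB

theorem norm_sub_apply_le_pow_succ {n j : ℕ} (hj1 : 1 ≤ j) (hjN : j ≤ N) {u u' : ℝ}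
    (hu : u ∈ Icc (t 0) (t N)) (hu' : u' ∈ Icc (t 0) (t N))
    (hclose : |L j u - L j u'| ≤ ρ ^ (n + 1) * (t N - t 0))
    (ih : |u - u'| ≤ ρ ^ n * (t N - t 0) → ‖g u - g u'‖ ≤ B * θ ^ n) :
    ‖g (L j u) - g (L j u')‖ ≤ B * θ ^ (n + 1) := by
  rw [pow_succ', mul_assoc] at hclose
  have hpre := hI.abs_sub_le_of_abs_sub_apply_le hN hj1 hjN hρ0 (hρa j hj1 hjN) hclose
  exact (hstep j hj1 hjN u hu u' hu').trans <| mul_add_mul_le_mul_pow_succ hγ0 hK hρ0.le hρθ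
    (sub_nonneg.2 (hI.first_lt_last hN).le) hB (ih hpre) hpre

variable (hρ1 : ρ < 1) (hD : ∀ x ∈ Icc (t 0) (t N), ∀ y ∈ Icc (t 0) (t N), ‖g x - g y‖ ≤ B)
include hρ1 hD

theorem norm_sub_le_pow_of_apply_eq_self {j₀ : ℕ} (hj1 : 1 ≤ j₀) (hjN : j₀ ≤ N) {e : ℝ}
    (he : e ∈ Icc (t 0) (t N)) (hfix : L j₀ e = e)
    (hcell : ∀ x ∈ Icc (t 0) (t N),
      |x - e| ≤ a j₀ * (t N - t 0) → x ∈ Icc (t (j₀ - 1)) (t j₀))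
    (n : ℕ) :
    ∀ x ∈ Icc (t 0) (t N), |x - e| ≤ ρ ^ n * (t N - t 0) → ‖g x - g e‖ ≤ B * θ ^ n := by
  induction n with
  | zero => simpa using fun x hx _ => hD x hx e he
  | succ n ih =>
    intro x hx hxe
    have hT : 0 ≤ t N - t 0 := sub_nonneg.2 (hI.first_lt_last hN).le
    have hρn : ρ ^ (n + 1) ≤ a j₀ :=
      (pow_le_of_le_one hρ0.le hρ1.le n.succ_ne_zero).trans (hρa j₀ hj1 hjN)
    obtain ⟨u, hu, rfl⟩ := hI.exists_apply_eq hN hj1 hjN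
      (hcell x hx (hxe.trans (mul_le_mul_of_nonneg_right hρn hT)))
    rw [← hfix] at hxe ⊢
    exact hI.norm_sub_apply_le_pow_succ hN hγ0 hK hstep hρ0 hρa hρθ hB hj1 hjN hu he hxe
      (ih u hu)

theorem norm_sub_last_le_pow (n : ℕ) :
    ∀ x ∈ Icc (t 0) (t N), |x - t N| ≤ ρ ^ n * (t N - t 0) → ‖g x - g (t N)‖ ≤ B * θ ^ n := by
  refine hI.norm_sub_le_pow_of_apply_eq_self hN hγ0 hK hstep hρ0 hρa hρθ hB hρ1 hD hN le_rfl
    ⟨(hI.first_lt_last hN).le, le_rfl⟩ (hI.apply_right N hN le_rfl)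
    (fun x hx hxN => ⟨?_, hx.2⟩) n
  rw [hI.slope_mul hN le_rfl, abs_sub_comm, abs_of_nonneg (sub_nonneg.2 hx.2)] at hxN
  linarith

theorem norm_sub_first_le_pow (n : ℕ) :
    ∀ x ∈ Icc (t 0) (t N), |x - t 0| ≤ ρ ^ n * (t N - t 0) → ‖g x - g (t 0)‖ ≤ B * θ ^ n := by
  refine hI.norm_sub_le_pow_of_apply_eq_self hN hγ0 hK hstep hρ0 hρa hρθ hB hρ1 hD le_rfl hN
    ⟨le_rfl, (hI.first_lt_last hN).le⟩ (hI.apply_left 1 le_rfl hN)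
    (fun x hx hx0 => ⟨hx.1, ?_⟩) n
  rw [hI.slope_mul le_rfl hN, abs_of_nonneg (sub_nonneg.2 hx.1)] at hx0
  simp only [Nat.sub_self] at hx0
  linarith

theorem norm_sub_le_two_mul_pow_succ_of_adjacent {i n : ℕ} (hi : i + 1 < N) {u u' : ℝ}
    (hu : u ∈ Icc (t 0) (t N)) (hu' : u' ∈ Icc (t 0) (t N))
    (hclose : L (i + 1 + 1) u' - L (i + 1) u ≤ ρ ^ (n + 1) * (t N - t 0)) :
    ‖g (L (i + 1) u) - g (L (i + 1 + 1) u')‖ ≤ 2 * B * θ ^ (n + 1) := by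
  have hN0 : t 0 ≤ t N := (hI.first_lt_last hN).le
  have hright : L (i + 1) (t N) = t (i + 1) := hI.apply_right (i + 1) (by omega) hi.le
  have hleft : L (i + 1 + 1) (t 0) = t (i + 1) := hI.apply_left (i + 1 + 1) (by omega) hi
  have hxt : L (i + 1) u ≤ t (i + 1) := hright ▸ hI.monotone_apply hN (by omega) hi.le hu.2
  have hty : t (i + 1) ≤ L (i + 1 + 1) u' := hleft ▸ hI.monotone_apply hN (by omega) hi hu'.1
  calc ‖g (L (i + 1) u) - g (L (i + 1 + 1) u')‖
      ≤ ‖g (L (i + 1) u) - g (t (i + 1))‖ + ‖g (t (i + 1)) - g (L (i + 1 + 1) u')‖ :=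
        norm_sub_le_norm_sub_add_norm_sub _ _ _
    _ ≤ B * θ ^ (n + 1) + B * θ ^ (n + 1) := by
      gcongr
      · rw [← hright]
        refine hI.norm_sub_apply_le_pow_succ hN hγ0 hK hstep hρ0 hρa hρθ hB (by omega) hi.le hu
          ⟨hN0, le_rfl⟩ ?_
          (hI.norm_sub_last_le_pow hN hγ0 hK hstep hρ0 hρa hρθ hB hρ1 hD n u hu)
        rw [hright, abs_sub_comm, abs_of_nonneg (sub_nonneg.2 hxt)]
        linarith
      · rw [← hleft]
        refine hI.norm_sub_apply_le_pow_succ hN hγ0 hK hstep hρ0 hρa hρθ hB (by omega) hi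
          ⟨le_rfl, hN0⟩ hu' ?_ fun h => ?_
        · rw [hleft, abs_sub_comm, abs_of_nonneg (sub_nonneg.2 hty)]
          linarith
        · rw [norm_sub_rev]
          exact hI.norm_sub_first_le_pow hN hγ0 hK hstep hρ0 hρa hρθ hB hρ1 hD n u' hu'
            (by rwa [abs_sub_comm])
    _ = 2 * B * θ ^ (n + 1) := by ring

theorem norm_sub_le_two_mul_pow_succ {n : ℕ}
    (ih : ∀ x ∈ Icc (t 0) (t N), ∀ y ∈ Icc (t 0) (t N),
      |x - y| ≤ ρ ^ n * (t N - t 0) → ‖g x - g y‖ ≤ 2 * B * θ ^ n)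
    {x y : ℝ} (hx : x ∈ Icc (t 0) (t N)) (hy : y ∈ Icc (t 0) (t N)) (hxy : x < y)
    (hclose : |x - y| ≤ ρ ^ (n + 1) * (t N - t 0)) : ‖g x - g y‖ ≤ 2 * B * θ ^ (n + 1) := by
  rw [abs_sub_comm, abs_of_pos (sub_pos.2 hxy)] at hclose
  obtain ⟨k, hkN, hyk⟩ := exists_mem_Ioc_succ ⟨hx.1.trans_lt hxy, hy.2⟩
  obtain ⟨u', hu', rfl⟩ := hI.exists_apply_eq hN (Nat.le_add_left 1 k) hkN
    (by simpa using Ioc_subset_Icc_self hyk)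
  have hT : 0 ≤ t N - t 0 := sub_nonneg.2 (hI.first_lt_last hN).le
  by_cases hkx : t k ≤ x
  · obtain ⟨u, hu, rfl⟩ := hI.exists_apply_eq hN (Nat.le_add_left 1 k) hkN
      (by simpa using (⟨hkx, hxy.le.trans hyk.2⟩ : x ∈ Icc (t k) (t (k + 1))))
    have hB2 : γ * (2 * B) + K * (t N - t 0) ≤ 2 * B * θ := by nlinarith [mul_nonneg hK hT]
    exact hI.norm_sub_apply_le_pow_succ hN hγ0 hK hstep hρ0 hρa hρθ hB2 (Nat.le_add_left 1 k)
      hkN hu hu' (by rwa [abs_sub_comm, abs_of_pos (sub_pos.2 hxy)]) (ih u hu u' hu')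
  -- `x` lies in the cell to the left of `y`'s, since cells are longer than `y - x`
  obtain ⟨i, rfl⟩ : ∃ i, k = i + 1 :=
    Nat.exists_eq_add_one.2 (Nat.pos_of_ne_zero (by rintro rfl; exact hkx hx.1))
  have hcell : t (i + 1) - t i = a (i + 1) * (t N - t 0) := by
    simpa using (hI.slope_mul (Nat.le_add_left 1 i) hkN.le).symm
  have hρn : ρ ^ (n + 1) ≤ a (i + 1) :=
    (pow_le_of_le_one hρ0.le hρ1.le n.succ_ne_zero).trans
      (hρa (i + 1) (Nat.le_add_left 1 i) hkN.le)
  have hxi : t i ≤ x := by linarith [hyk.1, mul_le_mul_of_nonneg_right hρn hT]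
  obtain ⟨u, hu, rfl⟩ := hI.exists_apply_eq hN (Nat.le_add_left 1 i) hkN.le
    (by simpa using (⟨hxi, le_of_not_ge hkx⟩ : x ∈ Icc (t i) (t (i + 1))))
  exact hI.norm_sub_le_two_mul_pow_succ_of_adjacent hN hγ0 hK hstep hρ0 hρa hρθ hB hρ1 hD hkN
    hu hu' hclose

theorem norm_sub_le_two_mul_pow (n : ℕ) : ∀ x ∈ Icc (t 0) (t N), ∀ y ∈ Icc (t 0) (t N),
    |x - y| ≤ ρ ^ n * (t N - t 0) → ‖g x - g y‖ ≤ 2 * B * θ ^ n := by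
  have ht0 : t 0 ∈ Icc (t 0) (t N) := ⟨le_rfl, (hI.first_lt_last hN).le⟩
  have hB0 : 0 ≤ B := by simpa using hD (t 0) ht0 (t 0) ht0
  have hθ0 : 0 ≤ θ := hρ0.le.trans hρθ
  induction n with
  | zero => exact fun x hx y hy _ => by linarith [hD x hx y hy]
  | succ n ih =>
    intro x hx y hy hxy
    rcases lt_trichotomy x y with hlt | rfl | hgt
    · exact hI.norm_sub_le_two_mul_pow_succ hN hγ0 hK hstep hρ0 hρa hρθ hB hρ1 hD ih hx hy hlt
        hxy
    · rw [sub_self, norm_zero]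
      positivity
    · rw [norm_sub_rev]
      exact hI.norm_sub_le_two_mul_pow_succ hN hγ0 hK hstep hρ0 hρa hρθ hB hρ1 hD ih hy hx hgt
        (by rwa [abs_sub_comm])

end Oscillation

theorem exists_holder (hN : 0 < N) {E : Type*} [SeminormedAddCommGroup E] {g : ℝ → E}
    {γ K : ℝ} (hγ0 : 0 ≤ γ) (hγ1 : γ < 1) (hK : 0 ≤ K)
    (hbdd : Bornology.IsBounded (g '' Icc (t 0) (t N)))
    (hstep : ∀ j, 1 ≤ j → j ≤ N → ∀ u ∈ Icc (t 0) (t N), ∀ u' ∈ Icc (t 0) (t N),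
      ‖g (L j u) - g (L j u')‖ ≤ γ * ‖g u - g u'‖ + K * |u - u'|) :
    ∃ C, 0 < C ∧ ∃ α : ℝ, 0 < α ∧ α ≤ 1 ∧ ∀ x ∈ Icc (t 0) (t N), ∀ y ∈ Icc (t 0) (t N),
      ‖g x - g y‖ ≤ C * |x - y| ^ α := by
  have hT : 0 < t N - t 0 := sub_pos.2 (hI.first_lt_last hN)
  obtain ⟨ρ, hρ0, hρ1, hρa⟩ := hI.exists_slope_lower_bound hN
  obtain ⟨D, hdiam⟩ := Metric.isBounded_iff.1 hbdd
  set θ := max ρ ((1 + γ) / 2)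
  have hγθ : γ < θ := lt_max_of_lt_right (by linarith)
  have hθ1 : θ < 1 := max_lt hρ1 (by linarith)
  set B := max D 1 + K * (t N - t 0) / (θ - γ)
  have hB : γ * B + K * (t N - t 0) ≤ B * θ := by
    have hKT : K * (t N - t 0) / (θ - γ) * (θ - γ) = K * (t N - t 0) :=
      div_mul_cancel₀ _ (sub_pos.2 hγθ).ne'
    nlinarith [le_max_right D 1, sub_pos.2 hγθ]
  have hD : ∀ x ∈ Icc (t 0) (t N), ∀ y ∈ Icc (t 0) (t N), ‖g x - g y‖ ≤ B := fun x hx y hy =>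
    calc ‖g x - g y‖ = dist (g x) (g y) := (dist_eq_norm _ _).symm
      _ ≤ D := hdiam (mem_image_of_mem g hx) (mem_image_of_mem g hy)
      _ ≤ B := (le_max_left D 1).trans (le_add_of_nonneg_right (by positivity))
  obtain ⟨C, hC, α, hα0, hα1, hg⟩ := exists_holder_of_dist_le_pow (g := g) hρ0
    (le_max_left _ _) hθ1 (by positivity : 0 < 2 * B) hT
    (fun x hx y hy => Real.dist_le_of_mem_Icc hx hy)
    (fun n x hx y hy hxy => by
      rw [dist_eq_norm]
      exact hI.norm_sub_le_two_mul_pow hN hγ0 hK hstep hρ0 hρa (le_max_left _ _) hB hρ1 hD n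
        x hx y hy (by rwa [Real.dist_eq] at hxy))
  exact ⟨C, hC, α, hα0, hα1, fun x hx y hy => by
    simpa only [dist_eq_norm, Real.norm_eq_abs] using hg x hx y hy⟩

end IsAffineCellMaps

theorem abs_sub_le_of_edelstein {φ : ℝ → ℝ} (h : ∀ x y, x ≠ y → |φ x - φ y| < |x - y|)
    (x y : ℝ) : |φ x - φ y| ≤ |x - y| := by
  rcases eq_or_ne x y with rfl | hxy
  · simp
  · exact (h x y hxy).le

theorem exists_forall_abs_le_of_nonexpansive {ι : Type*} (S : Finset ι) {φ : ι → ℝ → ℝ}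
    (hφ : ∀ i ∈ S, ∀ x y, |φ i x - φ i y| ≤ |x - y|) (R : ℝ) :
    ∃ M, 0 ≤ M ∧ ∀ i ∈ S, ∀ z, |z| ≤ R → |φ i z| ≤ M := by
  have h : ∀ᶠ M in atTop, ∀ i ∈ S, ∀ z, |z| ≤ R → |φ i z| ≤ M :=
    (Finset.eventually_all S).2 fun i hi => (eventually_ge_atTop (|φ i 0| + R)).mono
      fun M hM z hz => by
        have := hφ i hi z 0
        rw [sub_zero] at this
        linarith [abs_sub_abs_le_abs_sub (φ i z) (φ i 0)]
  exact ((eventually_ge_atTop 0).and h).exists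

theorem exists_lipschitzOnWith_of_finset {ι α β : Type*} [PseudoEMetricSpace α]
    [PseudoEMetricSpace β] {S : Finset ι} {G : ι → List (α → β)} {s : Set α}
    (h : ∀ i ∈ S, ∀ g ∈ G i, ∃ K, LipschitzOnWith K g s) :
    ∃ K, ∀ i ∈ S, ∀ g ∈ G i, LipschitzOnWith K g s :=
  ((Finset.eventually_all S).2 fun i hi => (eventually_all_finite (List.finite_toSet (G i))).2
    fun g hg => by
      obtain ⟨K, hK⟩ := h i hi g hg
      exact (eventually_ge_atTop K).mono fun K' hK' => hK.weaken hK').exists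

theorem abs_mul_add_mul_add_sub_le_s7 {β β' κ κ' π π' X X' Y Y' γ Δ ε Mx My : ℝ}
    (hβκ : |β| + |κ| ≤ γ) (hXY : max |X - X'| |Y - Y'| ≤ Δ) (hX' : |X'| ≤ Mx) (hY' : |Y'| ≤ My)
    (hβ : |β - β'| ≤ ε) (hκ : |κ - κ'| ≤ ε) (hπ : |π - π'| ≤ ε) :
    |β * X + κ * Y + π - (β' * X' + κ' * Y' + π')| ≤ γ * Δ + ε * (Mx + My + 1) := by
  have hX : |X - X'| ≤ Δ := (le_max_left _ _).trans hXY
  have hY : |Y - Y'| ≤ Δ := (le_max_right _ _).trans hXY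
  have hε : 0 ≤ ε := (abs_nonneg _).trans hπ
  have hcontr : |β| * |X - X'| + |κ| * |Y - Y'| ≤ γ * Δ := by
    nlinarith [abs_nonneg β, abs_nonneg κ, abs_nonneg (X - X')]
  have hcoeff : |β - β'| * |X'| + |κ - κ'| * |Y'| ≤ ε * Mx + ε * My := by gcongr
  calc |β * X + κ * Y + π - (β' * X' + κ' * Y' + π')|
      = |β * (X - X') + κ * (Y - Y') + ((β - β') * X' + (κ - κ') * Y' + (π - π'))| := by
        ring_nf
    _ ≤ |β| * |X - X'| + |κ| * |Y - Y'| + (|β - β'| * |X'| + |κ - κ'| * |Y'| + |π - π'|) := by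
      simp only [← abs_mul]
      exact (abs_add_le _ _).trans (add_le_add (abs_add_le _ _) (abs_add_three _ _ _))
    _ ≤ γ * Δ + ε * (Mx + My + 1) := by linarith

theorem exists_norm_sub_apply_le_of_fixed_point {N : ℕ} {I : Set ℝ} (hI : IsCompact I)
    {L : ℕ → ℝ → ℝ} {b c d e p q s r : ℕ → ℝ → ℝ} {F : ℕ → ℝ → ℝ × ℝ → ℝ × ℝ} {f : ℝ → ℝ × ℝ}
    (hLip : ∀ j, 1 ≤ j → j ≤ N → ∀ g ∈ ([b j, c j, d j, e j, p j, q j] : List (ℝ → ℝ)),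
      ∃ Kg : NNReal, LipschitzOnWith Kg g I)
    (hs : ∀ j, 1 ≤ j → j ≤ N → ∀ x y : ℝ, x ≠ y → |s j x - s j y| < |x - y|)
    (hr : ∀ j, 1 ≤ j → j ≤ N → ∀ x y : ℝ, x ≠ y → |r j x - r j y| < |x - y|)
    (hF : ∀ j x vw, F j x vw = (b j x * s j vw.1 + c j x * r j vw.2 + p j x,
                                d j x * s j vw.1 + e j x * r j vw.2 + q j x))
    (hbc : ∃ γ : ℝ, γ < 1 ∧ ∀ j, 1 ≤ j → j ≤ N → ∀ x ∈ I, |b j x| + |c j x| ≤ γ)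
    (hde : ∃ γ : ℝ, γ < 1 ∧ ∀ j, 1 ≤ j → j ≤ N → ∀ x ∈ I, |d j x| + |e j x| ≤ γ)
    (hfc : ContinuousOn f I)
    (hfe : ∀ j, 1 ≤ j → j ≤ N → ∀ x ∈ I, f (L j x) = F j x (f x)) :
    ∃ γ K : ℝ, 0 ≤ γ ∧ γ < 1 ∧ 0 ≤ K ∧ ∀ j, 1 ≤ j → j ≤ N → ∀ u ∈ I, ∀ u' ∈ I,
      ‖f (L j u) - f (L j u')‖ ≤ γ * ‖f u - f u'‖ + K * |u - u'| := by
  obtain ⟨γ₁, hγ₁, hbc⟩ := hbc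
  obtain ⟨γ₂, hγ₂, hde⟩ := hde
  obtain ⟨R, hR⟩ := hI.exists_bound_of_continuousOn hfc
  have hs' : ∀ j ∈ Finset.Icc 1 N, ∀ x y, |s j x - s j y| ≤ |x - y| := fun j hj =>
    abs_sub_le_of_edelstein (hs j (Finset.mem_Icc.1 hj).1 (Finset.mem_Icc.1 hj).2)
  have hr' : ∀ j ∈ Finset.Icc 1 N, ∀ x y, |r j x - r j y| ≤ |x - y| := fun j hj =>
    abs_sub_le_of_edelstein (hr j (Finset.mem_Icc.1 hj).1 (Finset.mem_Icc.1 hj).2)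
  obtain ⟨Ms, hMs0, hMs⟩ := exists_forall_abs_le_of_nonexpansive _ hs' R
  obtain ⟨Mr, hMr0, hMr⟩ := exists_forall_abs_le_of_nonexpansive _ hr' R
  obtain ⟨Kl, hKl⟩ := exists_lipschitzOnWith_of_finset (S := Finset.Icc 1 N) fun j hj =>
    hLip j (Finset.mem_Icc.1 hj).1 (Finset.mem_Icc.1 hj).2
  set γ := max (max γ₁ γ₂) 0
  refine ⟨γ, Kl * (Ms + Mr + 1), le_max_right _ _, max_lt (max_lt hγ₁ hγ₂) one_pos,
    by positivity, fun j hj1 hjN u hu u' hu' => ?_⟩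
  have hj : j ∈ Finset.Icc 1 N := Finset.mem_Icc.2 ⟨hj1, hjN⟩
  have hlip : ∀ g ∈ ([b j, c j, d j, e j, p j, q j] : List (ℝ → ℝ)),
      |g u - g u'| ≤ Kl * |u - u'| := fun g hg => by
    simpa only [Real.dist_eq] using (hKl j hj g hg).dist_le_mul u hu u' hu'
  have hXY :
      max |s j (f u).1 - s j (f u').1| |r j (f u).2 - r j (f u').2| ≤ ‖f u - f u'‖ := by
    rw [Prod.norm_def]
    exact max_le_max (hs' j hj _ _) (hr' j hj _ _)
  have hX' : |s j (f u').1| ≤ Ms := hMs j hj _ ((norm_fst_le _).trans (hR u' hu'))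
  have hY' : |r j (f u').2| ≤ Mr := hMr j hj _ ((norm_snd_le _).trans (hR u' hu'))
  have hγ₁γ : γ₁ ≤ γ := (le_max_left _ _).trans (le_max_left _ _)
  have hγ₂γ : γ₂ ≤ γ := (le_max_right _ _).trans (le_max_left _ _)
  rw [hfe j hj1 hjN u hu, hfe j hj1 hjN u' hu', hF, hF, Prod.mk_sub_mk, Prod.norm_def]
  refine max_le ((abs_mul_add_mul_add_sub_le_s7 ((hbc j hj1 hjN u hu).trans hγ₁γ) hXY hX' hY'
    (hlip _ (by simp)) (hlip _ (by simp)) (hlip _ (by simp))).trans_eq (by ring))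
    ((abs_mul_add_mul_add_sub_le_s7 ((hde j hj1 hjN u hu).trans hγ₂γ) hXY hX' hY'
    (hlip _ (by simp)) (hlip _ (by simp)) (hlip _ (by simp))).trans_eq (by ring))

theorem EHVFIF_smoothness_general
    (N : ℕ) (hN : 0 < N)
    (t : ℕ → ℝ)
    (htmono : ∀ j, j < N → t j < t (j + 1))
    (a fc : ℕ → ℝ) (L : ℕ → ℝ → ℝ)
    (hL : ∀ j, 1 ≤ j → j ≤ N → ∀ x : ℝ, L j x = a j * x + fc j)
    (hL0 : ∀ j, 1 ≤ j → j ≤ N → L j (t 0) = t (j - 1))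
    (hLN : ∀ j, 1 ≤ j → j ≤ N → L j (t N) = t j)
    (b c d e p q : ℕ → ℝ → ℝ)
    (hLip : ∀ j, 1 ≤ j → j ≤ N → ∀ g ∈ ([b j, c j, d j, e j, p j, q j] : List (ℝ → ℝ)),
      ∃ Kg : NNReal, LipschitzOnWith Kg g (Set.Icc (t 0) (t N)))
    (s r : ℕ → ℝ → ℝ)
    (hs : ∀ j, 1 ≤ j → j ≤ N → ∀ x y : ℝ, x ≠ y → |s j x - s j y| < |x - y|)
    (hr : ∀ j, 1 ≤ j → j ≤ N → ∀ x y : ℝ, x ≠ y → |r j x - r j y| < |x - y|)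
    (F : ℕ → ℝ → ℝ × ℝ → ℝ × ℝ)
    (hF : ∀ j x vw, F j x vw = (b j x * s j vw.1 + c j x * r j vw.2 + p j x,
                                d j x * s j vw.1 + e j x * r j vw.2 + q j x))
    (hbc : ∃ γ : ℝ, γ < 1 ∧ ∀ j, 1 ≤ j → j ≤ N → ∀ x ∈ Set.Icc (t 0) (t N),
      |b j x| + |c j x| ≤ γ)
    (hde : ∃ γ : ℝ, γ < 1 ∧ ∀ j, 1 ≤ j → j ≤ N → ∀ x ∈ Set.Icc (t 0) (t N),
      |d j x| + |e j x| ≤ γ)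
    (f : ℝ → ℝ × ℝ) (hfc : ContinuousOn f (Set.Icc (t 0) (t N)))
    (hfe : ∀ j, 1 ≤ j → j ≤ N → ∀ x ∈ Set.Icc (t 0) (t N), f (L j x) = F j x (f x))
    :
    ∃ C : ℝ, 0 < C ∧ ∃ α : ℝ, 0 < α ∧ α ≤ 1 ∧
      ∀ x ∈ Set.Icc (t 0) (t N), ∀ y ∈ Set.Icc (t 0) (t N),
        |(f x).1 - (f y).1| ≤ C * |x - y| ^ α := by
  obtain ⟨γ, K, hγ0, hγ1, hK, hstep⟩ := exists_norm_sub_apply_le_of_fixed_point isCompact_Icc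
    hLip hs hr hF hbc hde hfc hfe
  have hI : IsAffineCellMaps N t a fc L := ⟨htmono, hL, hL0, hLN⟩
  obtain ⟨C, hC, α, hα0, hα1, hf⟩ :=
    hI.exists_holder hN hγ0 hγ1 hK (isCompact_Icc.image_of_continuousOn hfc).isBounded hstep
  exact ⟨C, hC, α, hα0, hα1, fun x hx y hy =>
    (norm_fst_le (f x - f y)).trans (hf x hx y hy)⟩

/-- Smoothness of the Edelstein hidden variable fractal interpolation function: if
`max_j (‖b j‖∞ + ‖c j‖∞) < 1` and `max_j (‖d j‖∞ + ‖e j‖∞) < 1`, then the first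
component `f₁` of the fixed point `f` of the Read–Bajraktarević operator is Hölder
continuous on `I`. -/
theorem EHVFIF_smoothness
    (N : ℕ) (hN : 0 < N)
    (t v w : ℕ → ℝ)
    (htmono : ∀ j, j < N → t j < t (j + 1))
    (a fc : ℕ → ℝ) (L : ℕ → ℝ → ℝ)
    (hL : ∀ j, 1 ≤ j → j ≤ N → ∀ x : ℝ, L j x = a j * x + fc j)
    (ha : ∀ j, 1 ≤ j → j ≤ N → a j ≠ 0 ∧ |a j| < 1)
    (hL0 : ∀ j, 1 ≤ j → j ≤ N → L j (t 0) = t (j - 1))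
    (hLN : ∀ j, 1 ≤ j → j ≤ N → L j (t N) = t j)
    (b c d e p q : ℕ → ℝ → ℝ)
    (hLip : ∀ j, 1 ≤ j → j ≤ N → ∀ g ∈ ([b j, c j, d j, e j, p j, q j] : List (ℝ → ℝ)),
      ∃ Kg : NNReal, LipschitzOnWith Kg g (Set.Icc (t 0) (t N)))
    (hbd : ∀ j, 1 ≤ j → j ≤ N → ∃ B D : ℝ, B + D ≤ 1 ∧
      (∀ x ∈ Set.Icc (t 0) (t N), |b j x| ≤ B) ∧ (∀ x ∈ Set.Icc (t 0) (t N), |d j x| ≤ D))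
    (hce : ∀ j, 1 ≤ j → j ≤ N → ∃ C E : ℝ, C + E ≤ 1 ∧
      (∀ x ∈ Set.Icc (t 0) (t N), |c j x| ≤ C) ∧ (∀ x ∈ Set.Icc (t 0) (t N), |e j x| ≤ E))
    (s r : ℕ → ℝ → ℝ)
    (hs : ∀ j, 1 ≤ j → j ≤ N → ∀ x y : ℝ, x ≠ y → |s j x - s j y| < |x - y|)
    (hr : ∀ j, 1 ≤ j → j ≤ N → ∀ x y : ℝ, x ≠ y → |r j x - r j y| < |x - y|)
    (F : ℕ → ℝ → ℝ × ℝ → ℝ × ℝ)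
    (hF : ∀ j x vw, F j x vw = (b j x * s j vw.1 + c j x * r j vw.2 + p j x,
                                d j x * s j vw.1 + e j x * r j vw.2 + q j x))
    (hF0 : ∀ j, 1 ≤ j → j ≤ N → F j (t 0) (v 0, w 0) = (v (j - 1), w (j - 1)))
    (hFN : ∀ j, 1 ≤ j → j ≤ N → F j (t N) (v N, w N) = (v j, w j))
    (hbc : ∃ γ : ℝ, γ < 1 ∧ ∀ j, 1 ≤ j → j ≤ N → ∀ x ∈ Set.Icc (t 0) (t N),
      |b j x| + |c j x| ≤ γ)
    (hde : ∃ γ : ℝ, γ < 1 ∧ ∀ j, 1 ≤ j → j ≤ N → ∀ x ∈ Set.Icc (t 0) (t N),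
      |d j x| + |e j x| ≤ γ)
    (f : ℝ → ℝ × ℝ) (hfc : ContinuousOn f (Set.Icc (t 0) (t N)))
    (hfe : ∀ j, 1 ≤ j → j ≤ N → ∀ x ∈ Set.Icc (t 0) (t N), f (L j x) = F j x (f x))
    (hfi : ∀ j, j ≤ N → f (t j) = (v j, w j))
    :
    ∃ C : ℝ, 0 < C ∧ ∃ α : ℝ, 0 < α ∧ α ≤ 1 ∧
      ∀ x ∈ Set.Icc (t 0) (t N), ∀ y ∈ Set.Icc (t 0) (t N),
        |(f x).1 - (f y).1| ≤ C * |x - y| ^ α :=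
  EHVFIF_smoothness_general N hN t htmono a fc L hL hL0 hLN b c d e p q hLip s r hs hr F hF hbc hde
    f hfc hfe
end
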